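/- Let n ≥ 1 be an integer, 0 < s < n, x₀ ∈ ℝ^n, and let h : [0,∞) → [0,∞) be nonincreasing with f(x) = h(|x−x₀|) belonging to L^1(ℝ^n). Then ‖M_s f‖_{L^{n/(n−s),∞}(ℝ^n)} = ‖f‖_{L^1(ℝ^n)}. -/

import Mathlib

open MeasureTheory Real Set
open scoped ENNReal

noncomputable section

abbrev Rn (n : ℕ) := EuclideanSpace ℝ (Fin n)

/-- The constant `γ_s = 2^{-s} π^{-n/2} Γ((n-s)/2) / Γ(s/2)`. -/
def rieszGamma (n : ℕ) (s : ℝ) : ℝ :=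
  (2 : ℝ) ^ (-s) * Real.pi ^ (-(n : ℝ) / 2) * Real.Gamma (((n : ℝ) - s) / 2) / Real.Gamma (s / 2)

/-- The Riesz potential `I_s f (x) = γ_s ∫ f(x-y) |y|^{s-n} dy`. -/
def rieszPotential (n : ℕ) (s : ℝ) (f : Rn n → ℝ) (x : Rn n) : ℝ :=
  rieszGamma n s * ∫ y : Rn n, f (x - y) * ‖y‖ ^ (s - (n : ℝ))

/-- `v_n`, the Lebesgue measure of the unit ball of `ℝ^n`. -/
def unitBallVol (n : ℕ) : ℝ := (volume (Metric.ball (0 : Rn n) 1)).toReal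

/-- The weak `L^{n/(n-s)}` quasinorm `sup_{λ>0} λ |{|g|>λ}|^{(n-s)/n}`. -/
def weakNorm (n : ℕ) (s : ℝ) (g : Rn n → ℝ) : ℝ :=
  sSup {c : ℝ | ∃ lam : ℝ, 0 < lam ∧
    c = lam * (volume {x : Rn n | lam < |g x|}).toReal ^ (((n : ℝ) - s) / (n : ℝ))}

/-- The norm `⦀g⦀_r = sup_{0<|E|<∞} |E|^{-1/r+(n-s)/n} (∫_E |g|^r)^{1/r}`. -/
def tripleNorm (n : ℕ) (s r : ℝ) (g : Rn n → ℝ) : ℝ :=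
  sSup {c : ℝ | ∃ E : Set (Rn n), MeasurableSet E ∧ 0 < volume E ∧ volume E < ⊤ ∧
    c = (volume E).toReal ^ (-1 / r + ((n : ℝ) - s) / (n : ℝ)) *
      (∫ x in E, |g x| ^ r) ^ (1 / r)}

/-- The centered fractional maximal function
`M_s f (x) = sup_{r>0} |B(x,r)|^{-(1-s/n)} ∫_{B(x,r)} |f|`. -/
def fracMaximal (n : ℕ) (s : ℝ) (f : Rn n → ℝ) (x : Rn n) : ℝ :=
  sSup {c : ℝ | ∃ rad : ℝ, 0 < rad ∧
    c = (volume (Metric.ball x rad)).toReal ^ (-(1 - s / (n : ℝ))) *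
      ∫ y in Metric.ball x rad, |f y|}

open Metric Filter Topology

/-!
Every superlevel set of `f = h (‖· - x₀‖)` is a ball centred at `x₀` (open or closed) or all of
`ℝⁿ`, and the intersection of `B(x, r)` with a ball `B(x₀, ρ)` lies in a ball of radius
`r ρ / |x - x₀|`. By the layer-cake formula, `∫_{B(x,r)} f ≤ (r / |x - x₀|)ⁿ ‖f‖₁`, whence
`M_s f(x) ≤ |B(x₀, |x - x₀|)|^{s/n - 1} ‖f‖₁`. The superlevel sets of this bound are balls around
`x₀`, which gives `‖M_s f‖_{L^{n/(n-s),∞}} ≤ ‖f‖₁`. Conversely, for `x ∈ B(x₀, D)` the ball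
`B(x, |x - x₀| + R)` contains `B(x₀, R)`, so `M_s f > |B(x₀, D + R)|^{s/n - 1} ∫_{B(x₀,R)} f` on
`B(x₀, D) \ {x₀}`; letting `D → ∞` and then `R → ∞` gives the reverse inequality.
-/

lemma radial_superlevel_eq_univ_or_between_balls {E : Type*} [NormedAddCommGroup E]
    {h : ℝ → ℝ} (hmono : AntitoneOn h (Ici 0)) (x₀ : E) (t : ℝ) :
    {y : E | t < h ‖y - x₀‖} = univ ∨ ∃ ρ, 0 ≤ ρ ∧
      ball x₀ ρ ⊆ {y : E | t < h ‖y - x₀‖} ∧ {y : E | t < h ‖y - x₀‖} ⊆ closedBall x₀ ρ := by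
  set S := {u : ℝ | 0 ≤ u ∧ t < h u}
  have hS : ∀ u ∈ S, ∀ v, 0 ≤ v → v ≤ u → v ∈ S := fun u hu v hv hvu =>
    ⟨hv, hu.2.trans_le (hmono hv hu.1 hvu)⟩
  have hlevel : ∀ y : E, t < h ‖y - x₀‖ ↔ dist y x₀ ∈ S := fun y => by
    simp [S, dist_eq_norm]
  by_cases hbdd : BddAbove S
  · refine Or.inr ⟨sSup S, Real.sSup_nonneg fun u hu => hu.1, fun y hy => ?_,
      fun y hy => mem_closedBall.2 (le_csSup hbdd ((hlevel y).1 hy))⟩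
    rcases S.eq_empty_or_nonempty with hS0 | hne
    · simp [hS0] at hy
    obtain ⟨u, hu, hyu⟩ := exists_lt_of_lt_csSup hne (mem_ball.1 hy)
    exact (hlevel y).2 (hS u hu _ dist_nonneg hyu.le)
  · refine Or.inl (eq_univ_of_forall fun y => (hlevel y).2 ?_)
    obtain ⟨u, hu, hyu⟩ := not_bddAbove_iff.1 hbdd (dist y x₀)
    exact hS u hu _ dist_nonneg hyu.le

section Lens

variable {E : Type*} [NormedAddCommGroup E] [InnerProductSpace ℝ E]

lemma norm_sub_smul_sq (a w : E) (α : ℝ) :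
    ‖a - α • w‖ ^ 2 = (1 - α) * ‖a‖ ^ 2 + α * ‖a - w‖ ^ 2 - α * (1 - α) * ‖w‖ ^ 2 := by
  rw [norm_sub_sq_real, norm_sub_sq_real, real_inner_smul_right, norm_smul, mul_pow,
    Real.norm_eq_abs, sq_abs]
  ring

lemma exists_closedBall_inter_closedBall_subset {x y : E} (hxy : x ≠ y) {r t : ℝ}
    (hr : 0 ≤ r) (ht : 0 ≤ t) :
    ∃ c : E, closedBall x r ∩ closedBall y t ⊆ closedBall c (r * t / dist x y) := by
  set d := dist x y
  have hd : 0 < d := dist_pos.2 hxy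
  have hrtd : 0 ≤ r * t / d := by positivity
  rcases le_or_gt (r ^ 2) (d ^ 2 + t ^ 2) with hy | hy
  swap
  · refine ⟨y, fun z hz => mem_closedBall.2 (hz.2.trans ?_)⟩
    rw [le_div_iff₀ hd]
    nlinarith
  rcases le_or_gt (t ^ 2) (d ^ 2 + r ^ 2) with hx | hx
  swap
  · refine ⟨x, fun z hz => mem_closedBall.2 (hz.1.trans ?_)⟩
    rw [le_div_iff₀ hd]
    nlinarith
  -- the center is the foot on `[y, x]` of the radical hyperplane of the two spheres
  set α := (t ^ 2 + d ^ 2 - r ^ 2) / (2 * d ^ 2)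
  have hαd : α * (2 * d ^ 2) = t ^ 2 + d ^ 2 - r ^ 2 := div_mul_cancel₀ _ (by positivity)
  have hα0 : 0 ≤ α := div_nonneg (by linarith) (by positivity)
  have hα1 : α ≤ 1 := (div_le_one (by positivity)).2 (by linarith)
  refine ⟨y + α • (x - y), fun z hz => ?_⟩
  have hzy : ‖z - y‖ ≤ t := by rw [← dist_eq_norm]; exact hz.2
  have hzx : ‖z - y - (x - y)‖ ≤ r := by rw [sub_sub_sub_cancel_right, ← dist_eq_norm]; exact hz.1
  have hxy' : ‖x - y‖ = d := (dist_eq_norm x y).symm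
  have hsq : ‖z - y - α • (x - y)‖ ^ 2 ≤ (r * t / d) ^ 2 := by
    rw [norm_sub_smul_sq, hxy', div_pow, le_div_iff₀ (by positivity)]
    have h1 : (1 - α) * ‖z - y‖ ^ 2 ≤ (1 - α) * t ^ 2 :=
      mul_le_mul_of_nonneg_left (pow_le_pow_left₀ (norm_nonneg _) hzy 2) (by linarith)
    have h2 : α * ‖z - y - (x - y)‖ ^ 2 ≤ α * r ^ 2 :=
      mul_le_mul_of_nonneg_left (pow_le_pow_left₀ (norm_nonneg _) hzx 2) hα0
    nlinarith [sq_nonneg (t ^ 2 - d ^ 2 + r ^ 2)]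
  rw [mem_closedBall, dist_eq_norm, sub_add_eq_sub_sub]
  exact (pow_le_pow_iff_left₀ (norm_nonneg _) hrtd two_ne_zero).1 hsq

end Lens

section Radial

variable {E : Type*} [NormedAddCommGroup E] [InnerProductSpace ℝ E] [FiniteDimensional ℝ E]
  [MeasurableSpace E] [BorelSpace E] {μ : Measure E} [μ.IsAddHaarMeasure]
  {h : ℝ → ℝ} {x₀ : E}

lemma measure_ball_inter_le_of_subset_closedBall {L : Set E} {ρ : ℝ} (hρ : 0 ≤ ρ)
    (hball : ball x₀ ρ ⊆ L) (hclosed : L ⊆ closedBall x₀ ρ) {x : E} (hx : x ≠ x₀) {r : ℝ}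
    (hr : 0 ≤ r) :
    μ (ball x r ∩ L) ≤ ENNReal.ofReal ((r / dist x x₀) ^ Module.finrank ℝ E) * μ L := by
  have := nontrivial_of_ne x x₀ hx
  obtain ⟨c, hc⟩ := exists_closedBall_inter_closedBall_subset hx hr hρ
  calc μ (ball x r ∩ L) ≤ μ (closedBall c (r * ρ / dist x x₀)) :=
        measure_mono fun z hz => hc ⟨ball_subset_closedBall hz.1, hclosed hz.2⟩
    _ = ENNReal.ofReal ((r / dist x x₀) ^ Module.finrank ℝ E) * μ (ball x₀ ρ) := by
        rw [Measure.addHaar_closedBall μ _ (by positivity), Measure.addHaar_ball μ _ hρ,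
          ← mul_assoc, ← ENNReal.ofReal_mul (by positivity), ← mul_pow, mul_div_right_comm]
    _ ≤ _ := by gcongr

lemma measure_ball_inter_radial_superlevel_le (hmono : AntitoneOn h (Ici 0)) {x : E}
    (hx : x ≠ x₀) {r : ℝ} (hr : 0 < r) (t : ℝ) :
    μ (ball x r ∩ {y | t < h ‖y - x₀‖}) ≤
      ENNReal.ofReal ((r / dist x x₀) ^ Module.finrank ℝ E) * μ {y | t < h ‖y - x₀‖} := by
  have := nontrivial_of_ne x x₀ hx
  rcases radial_superlevel_eq_univ_or_between_balls hmono x₀ t with huniv | ⟨ρ, hρ, hball, hclosed⟩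
  · rw [huniv, measure_univ_of_isAddLeftInvariant, ENNReal.mul_top]
    · exact le_top
    · have := dist_pos.2 hx
      positivity
  · exact measure_ball_inter_le_of_subset_closedBall hρ hball hclosed hx hr.le

lemma setIntegral_ball_le_of_radial (hh0 : ∀ t, 0 ≤ t → 0 ≤ h t) (hmono : AntitoneOn h (Ici 0))
    (hf : Integrable (fun y => h ‖y - x₀‖) μ) {x : E} (hx : x ≠ x₀) {r : ℝ} (hr : 0 < r) :
    ∫ y in ball x r, h ‖y - x₀‖ ∂μ ≤
      (r / dist x x₀) ^ Module.finrank ℝ E * ∫ y, h ‖y - x₀‖ ∂μ := by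
  set C := (r / dist x x₀) ^ Module.finrank ℝ E
  have hC : 0 ≤ C := by have := dist_pos.2 hx; positivity
  have hf0 : 0 ≤ᵐ[μ] fun y => h ‖y - x₀‖ := ae_of_all _ fun y => hh0 _ (norm_nonneg _)
  have hlayer : ∫⁻ y in ball x r, ENNReal.ofReal (h ‖y - x₀‖) ∂μ ≤
      ENNReal.ofReal C * ∫⁻ y, ENNReal.ofReal (h ‖y - x₀‖) ∂μ := by
    rw [lintegral_eq_lintegral_meas_lt _ (ae_restrict_of_ae hf0) hf.aemeasurable.restrict,
      lintegral_eq_lintegral_meas_lt _ hf0 hf.aemeasurable, ← lintegral_const_mul' _ _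
        ENNReal.ofReal_ne_top]
    refine lintegral_mono fun t => ?_
    rw [Measure.restrict_apply' measurableSet_ball, inter_comm]
    exact measure_ball_inter_radial_superlevel_le hmono hx hr t
  rw [integral_eq_lintegral_of_nonneg_ae (ae_restrict_of_ae hf0) hf.aestronglyMeasurable.restrict]
  refine ENNReal.toReal_le_of_le_ofReal (mul_nonneg hC (integral_nonneg_of_ae hf0)) ?_
  rwa [ENNReal.ofReal_mul hC, ofReal_integral_eq_lintegral_ofReal hf hf0]

end Radial

section FractionalMaximal

variable {n : ℕ} {s : ℝ} {h : ℝ → ℝ} {x₀ : Rn n}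

def fracAverage (n : ℕ) (s : ℝ) (f : Rn n → ℝ) (x : Rn n) (r : ℝ) : ℝ :=
  (volume (ball x r)).toReal ^ (-(1 - s / (n : ℝ))) * ∫ y in ball x r, |f y|

lemma fracAverage_nonneg (f : Rn n → ℝ) (x : Rn n) (r : ℝ) : 0 ≤ fracAverage n s f x r :=
  mul_nonneg (rpow_nonneg ENNReal.toReal_nonneg _) (integral_nonneg fun _ => abs_nonneg _)

lemma fracMaximal_nonneg (f : Rn n → ℝ) (x : Rn n) : 0 ≤ fracMaximal n s f x :=
  Real.sSup_nonneg <| by rintro _ ⟨r, -, rfl⟩; exact fracAverage_nonneg f x r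

lemma volume_ball_toReal_pos (x : Rn n) {r : ℝ} (hr : 0 < r) : 0 < (volume (ball x r)).toReal :=
  ENNReal.toReal_pos (measure_ball_pos volume x hr).ne' measure_ball_lt_top.ne

lemma unitBallVol_pos (n : ℕ) : 0 < unitBallVol n :=
  volume_ball_toReal_pos 0 one_pos

lemma nontrivial_Rn (hn : 1 ≤ n) : Nontrivial (Rn n) :=
  Module.nontrivial_of_finrank_pos (R := ℝ) (by rw [finrank_euclideanSpace_fin]; omega)

lemma volume_ball_toReal (hn : 1 ≤ n) (x : Rn n) {r : ℝ} (hr : 0 ≤ r) :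
    (volume (ball x r)).toReal = r ^ n * unitBallVol n := by
  have := nontrivial_Rn hn
  rw [Measure.addHaar_ball volume x hr, finrank_euclideanSpace_fin, ENNReal.toReal_mul,
    ENNReal.toReal_ofReal (by positivity), unitBallVol]

lemma volume_ball_toReal_lt_iff (hn : 1 ≤ n) (x y : Rn n) {r t : ℝ} (hr : 0 ≤ r) (ht : 0 ≤ t) :
    (volume (ball x r)).toReal < (volume (ball y t)).toReal ↔ r < t := by
  rw [volume_ball_toReal hn x hr, volume_ball_toReal hn y ht,
    mul_lt_mul_iff_left₀ (unitBallVol_pos n), pow_lt_pow_iff_left₀ hr ht (by omega)]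

lemma fracAverage_le_of_ne (hn : 1 ≤ n) (hs0 : 0 ≤ s) (hsn : s ≤ n)
    (hh0 : ∀ t, 0 ≤ t → 0 ≤ h t) (hmono : AntitoneOn h (Ici 0))
    (hf : Integrable fun y => h ‖y - x₀‖) {x : Rn n} (hx : x ≠ x₀) {r : ℝ} (hr : 0 < r) :
    fracAverage n s (fun y => h ‖y - x₀‖) x r ≤
      (volume (ball x₀ (dist x x₀))).toReal ^ (-(1 - s / n)) * ∫ y, |h ‖y - x₀‖| := by
  have habs : ∀ y : Rn n, |h ‖y - x₀‖| = h ‖y - x₀‖ := fun y =>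
    abs_of_nonneg (hh0 _ (norm_nonneg _))
  simp only [fracAverage, habs]
  set d := dist x x₀
  have hd : 0 < d := dist_pos.2 hx
  have hv := unitBallVol_pos n
  set q := 1 - s / n
  have hq1 : 0 ≤ 1 - q := by simp only [q, sub_sub_cancel]; positivity
  have hq' : 0 ≤ q := sub_nonneg.2 ((div_le_one (by positivity)).2 hsn)
  have hI : 0 ≤ ∫ y, h ‖y - x₀‖ := integral_nonneg fun y => hh0 _ (norm_nonneg _)
  have hball := setIntegral_le_integral (s := ball x r) hf
    (ae_of_all _ fun y => hh0 _ (norm_nonneg (y - x₀)))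
  rw [volume_ball_toReal hn x hr.le, volume_ball_toReal hn x₀ hd.le]
  rcases le_or_gt r d with hrd | hdr
  · have hlocal := setIntegral_ball_le_of_radial hh0 hmono hf hx hr
    rw [finrank_euclideanSpace_fin] at hlocal
    have hratio : (r / d) ^ n = r ^ n * unitBallVol n / (d ^ n * unitBallVol n) := by
      rw [div_pow, mul_div_mul_right _ _ hv.ne']
    rw [hratio] at hlocal
    calc (r ^ n * unitBallVol n) ^ (-q) * ∫ y in ball x r, h ‖y - x₀‖
        ≤ (r ^ n * unitBallVol n) ^ (-q) *
            (r ^ n * unitBallVol n / (d ^ n * unitBallVol n) * ∫ y, h ‖y - x₀‖) := by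
          gcongr
      _ = (r ^ n * unitBallVol n) ^ (1 - q) * (d ^ n * unitBallVol n)⁻¹ * ∫ y, h ‖y - x₀‖ := by
          rw [sub_eq_add_neg, rpow_add (by positivity), rpow_one]
          ring
      _ ≤ (d ^ n * unitBallVol n) ^ (1 - q) * (d ^ n * unitBallVol n)⁻¹ * ∫ y, h ‖y - x₀‖ := by
          gcongr
      _ = (d ^ n * unitBallVol n) ^ (-q) * ∫ y, h ‖y - x₀‖ := by
          rw [sub_eq_add_neg, rpow_add (by positivity), rpow_one]
          field_simp
  · calc (r ^ n * unitBallVol n) ^ (-q) * ∫ y in ball x r, h ‖y - x₀‖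
        ≤ (r ^ n * unitBallVol n) ^ (-q) * ∫ y, h ‖y - x₀‖ := by gcongr
      _ ≤ (d ^ n * unitBallVol n) ^ (-q) * ∫ y, h ‖y - x₀‖ := by
          have hdn : 0 < d ^ n * unitBallVol n := by positivity
          exact mul_le_mul_of_nonneg_right
            (rpow_le_rpow_of_nonpos hdn (by gcongr) (neg_nonpos.2 hq')) hI

lemma fracMaximal_le_of_ne (hn : 1 ≤ n) (hs0 : 0 ≤ s) (hsn : s ≤ n)
    (hh0 : ∀ t, 0 ≤ t → 0 ≤ h t) (hmono : AntitoneOn h (Ici 0))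
    (hf : Integrable fun y => h ‖y - x₀‖) {x : Rn n} (hx : x ≠ x₀) :
    fracMaximal n s (fun y => h ‖y - x₀‖) x ≤
      (volume (ball x₀ (dist x x₀))).toReal ^ (-(1 - s / n)) * ∫ y, |h ‖y - x₀‖| :=
  Real.sSup_le (by rintro _ ⟨r, hr, rfl⟩; exact fracAverage_le_of_ne hn hs0 hsn hh0 hmono hf hx hr)
    (mul_nonneg (rpow_nonneg ENNReal.toReal_nonneg _) (integral_nonneg fun _ => abs_nonneg _))

lemma fracAverage_le_fracMaximal (hn : 1 ≤ n) (hs0 : 0 ≤ s) (hsn : s ≤ n)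
    (hh0 : ∀ t, 0 ≤ t → 0 ≤ h t) (hmono : AntitoneOn h (Ici 0))
    (hf : Integrable fun y => h ‖y - x₀‖) {x : Rn n} (hx : x ≠ x₀) {r : ℝ} (hr : 0 < r) :
    fracAverage n s (fun y => h ‖y - x₀‖) x r ≤ fracMaximal n s (fun y => h ‖y - x₀‖) x :=
  le_csSup ⟨_, by rintro _ ⟨r, hr, rfl⟩; exact fracAverage_le_of_ne hn hs0 hsn hh0 hmono hf hx hr⟩
    ⟨r, hr, rfl⟩

lemma volume_setOf_lt_fracMaximal_le (hn : 1 ≤ n) (hs0 : 0 ≤ s) (hsn : s < n)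
    (hh0 : ∀ t, 0 ≤ t → 0 ≤ h t) (hmono : AntitoneOn h (Ici 0))
    (hf : Integrable fun y => h ‖y - x₀‖) {lam : ℝ} (hlam : 0 < lam) :
    volume {x | lam < |fracMaximal n s (fun y => h ‖y - x₀‖) x|} ≤
      ENNReal.ofReal (((∫ y, |h ‖y - x₀‖|) / lam) ^ (1 - s / n)⁻¹) := by
  set I := ∫ y, |h ‖y - x₀‖|
  set q := 1 - s / n
  have hq : 0 < q := sub_pos.2 ((div_lt_one (by positivity)).2 hsn)
  set X := (I / lam) ^ q⁻¹
  have hX : 0 ≤ X := rpow_nonneg (div_nonneg (integral_nonneg fun _ => abs_nonneg _) hlam.le) _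
  have hv := unitBallVol_pos n
  set R := (X / unitBallVol n) ^ (n⁻¹ : ℝ)
  have hR : 0 ≤ R := rpow_nonneg (div_nonneg hX hv.le) _
  have hVR : (volume (ball x₀ R)).toReal = X := by
    rw [volume_ball_toReal hn x₀ hR, rpow_inv_natCast_pow (div_nonneg hX hv.le) (by omega),
      div_mul_cancel₀ _ hv.ne']
  have hsub : {x | lam < |fracMaximal n s (fun y => h ‖y - x₀‖) x|} \ {x₀} ⊆ ball x₀ R := by
    rintro x ⟨hlt, hx⟩
    rw [mem_ofPred_eq, abs_of_nonneg (fracMaximal_nonneg _ _)] at hlt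
    have hx : x ≠ x₀ := hx
    set W := (volume (ball x₀ (dist x x₀))).toReal
    have hW : 0 < W := volume_ball_toReal_pos x₀ (dist_pos.2 hx)
    have hWq : W ^ q < I / lam := by
      rw [lt_div_iff₀ hlam, mul_comm, ← lt_div_iff₀ (rpow_pos_of_pos hW q), div_eq_inv_mul,
        ← rpow_neg hW.le]
      exact hlt.trans_le (fracMaximal_le_of_ne hn hs0 hsn.le hh0 hmono hf hx)
    have hWX : W < X := by
      simpa only [rpow_rpow_inv hW.le hq.ne'] using rpow_lt_rpow (by positivity) hWq (inv_pos.2 hq)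
    exact mem_ball.2 ((volume_ball_toReal_lt_iff hn x₀ x₀ dist_nonneg hR).1 (hVR ▸ hWX))
  have := nontrivial_Rn hn
  calc volume {x | lam < |fracMaximal n s (fun y => h ‖y - x₀‖) x|}
      = volume ({x | lam < |fracMaximal n s (fun y => h ‖y - x₀‖) x|} \ {x₀}) :=
        (measure_sdiff_null (measure_singleton x₀)).symm
    _ ≤ volume (ball x₀ R) := measure_mono hsub
    _ = ENNReal.ofReal X := by rw [← hVR, ENNReal.ofReal_toReal measure_ball_lt_top.ne]

lemma mul_volume_setOf_lt_fracMaximal_rpow_le (hn : 1 ≤ n) (hs0 : 0 ≤ s) (hsn : s < n)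
    (hh0 : ∀ t, 0 ≤ t → 0 ≤ h t) (hmono : AntitoneOn h (Ici 0))
    (hf : Integrable fun y => h ‖y - x₀‖) {lam : ℝ} (hlam : 0 < lam) :
    lam * (volume {x | lam < |fracMaximal n s (fun y => h ‖y - x₀‖) x|}).toReal ^
      (((n : ℝ) - s) / n) ≤ ∫ y, |h ‖y - x₀‖| := by
  have hn' : (0 : ℝ) < n := by exact_mod_cast hn
  have hq : 0 < 1 - s / n := sub_pos.2 ((div_lt_one hn').2 hsn)
  have hI : 0 ≤ ∫ y, |h ‖y - x₀‖| := integral_nonneg fun _ => abs_nonneg _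
  have hvol := ENNReal.toReal_le_of_le_ofReal (by positivity)
    (volume_setOf_lt_fracMaximal_le hn hs0 hsn hh0 hmono hf hlam)
  rw [sub_div, div_self hn'.ne']
  calc lam * (volume {x | lam < |fracMaximal n s (fun y => h ‖y - x₀‖) x|}).toReal ^ (1 - s / n)
      ≤ lam * (((∫ y, |h ‖y - x₀‖|) / lam) ^ (1 - s / n)⁻¹) ^ (1 - s / n) := by gcongr
    _ = ∫ y, |h ‖y - x₀‖| := by
      rw [rpow_inv_rpow (div_nonneg hI hlam.le) hq.ne', mul_div_cancel₀ _ hlam.ne']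

lemma weakNorm_fracMaximal_le (hn : 1 ≤ n) (hs0 : 0 ≤ s) (hsn : s < n)
    (hh0 : ∀ t, 0 ≤ t → 0 ≤ h t) (hmono : AntitoneOn h (Ici 0))
    (hf : Integrable fun y => h ‖y - x₀‖) :
    weakNorm n s (fracMaximal n s fun y => h ‖y - x₀‖) ≤ ∫ y, |h ‖y - x₀‖| :=
  csSup_le ⟨_, 1, one_pos, rfl⟩ <| by
    rintro _ ⟨lam, hlam, rfl⟩
    exact mul_volume_setOf_lt_fracMaximal_rpow_le hn hs0 hsn hh0 hmono hf hlam

lemma mul_volume_setOf_lt_fracMaximal_rpow_le_weakNorm (hn : 1 ≤ n) (hs0 : 0 ≤ s) (hsn : s < n)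
    (hh0 : ∀ t, 0 ≤ t → 0 ≤ h t) (hmono : AntitoneOn h (Ici 0))
    (hf : Integrable fun y => h ‖y - x₀‖) {lam : ℝ} (hlam : 0 < lam) :
    lam * (volume {x | lam < |fracMaximal n s (fun y => h ‖y - x₀‖) x|}).toReal ^
      (((n : ℝ) - s) / n) ≤ weakNorm n s (fracMaximal n s fun y => h ‖y - x₀‖) :=
  le_csSup ⟨_, by
    rintro _ ⟨lam, hlam, rfl⟩
    exact mul_volume_setOf_lt_fracMaximal_rpow_le hn hs0 hsn hh0 hmono hf hlam⟩ ⟨lam, hlam, rfl⟩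

lemma rpow_mul_setIntegral_ball_le_weakNorm (hn : 1 ≤ n) (hs0 : 0 ≤ s) (hsn : s < n)
    (hh0 : ∀ t, 0 ≤ t → 0 ≤ h t) (hmono : AntitoneOn h (Ici 0))
    (hf : Integrable fun y => h ‖y - x₀‖) {R D : ℝ} (hR : 0 < R) (hD : 0 < D) :
    ((D / (D + R)) ^ n) ^ (((n : ℝ) - s) / n) * ∫ y in ball x₀ R, |h ‖y - x₀‖| ≤
      weakNorm n s (fracMaximal n s fun y => h ‖y - x₀‖) := by
  have := nontrivial_Rn hn
  set m := ∫ y in ball x₀ R, |h ‖y - x₀‖|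
  set p := ((n : ℝ) - s) / n
  have hn' : (0 : ℝ) < n := by exact_mod_cast hn
  have hp : 0 < p := div_pos (sub_pos.2 hsn) hn'
  have hpq : -(1 - s / n) = -p := by simp only [p, sub_div, div_self hn'.ne']
  rcases (integral_nonneg fun _ => abs_nonneg _ : 0 ≤ m).eq_or_lt with hm | hm
  · rw [show m = 0 from hm.symm, mul_zero]
    exact le_trans (by positivity)
      (mul_volume_setOf_lt_fracMaximal_rpow_le_weakNorm hn hs0 hsn hh0 hmono hf one_pos)
  set lam := (volume (ball x₀ (D + R))).toReal ^ (-p) * m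
  have hlam : 0 < lam := mul_pos (rpow_pos_of_pos (volume_ball_toReal_pos _ (by positivity)) _) hm
  have hsub : ball x₀ D \ {x₀} ⊆ {x | lam < |fracMaximal n s (fun y => h ‖y - x₀‖) x|} := by
    rintro x ⟨hxD, hx⟩
    have hx : x ≠ x₀ := hx
    have hd : 0 < dist x x₀ := dist_pos.2 hx
    rw [mem_ofPred_eq, abs_of_nonneg (fracMaximal_nonneg _ _)]
    calc lam < (volume (ball x (dist x x₀ + R))).toReal ^ (-p) * m := by
          refine mul_lt_mul_of_pos_right (rpow_lt_rpow_of_neg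
            (volume_ball_toReal_pos _ (by positivity)) ?_ (neg_neg_of_pos hp)) hm
          exact (volume_ball_toReal_lt_iff hn _ _ (by positivity) (by positivity)).2
            (by linarith [mem_ball.1 hxD])
      _ ≤ fracAverage n s (fun y => h ‖y - x₀‖) x (dist x x₀ + R) := by
          rw [fracAverage, hpq]
          gcongr
          refine setIntegral_mono_set hf.abs.integrableOn (ae_of_all _ fun _ => abs_nonneg _) ?_
          exact (ball_subset_ball' (by rw [dist_comm, add_comm])).eventuallyLE
      _ ≤ fracMaximal n s (fun y => h ‖y - x₀‖) x :=
          fracAverage_le_fracMaximal hn hs0 hsn.le hh0 hmono hf hx (by positivity)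
  have hvol : (volume (ball x₀ D)).toReal ≤
      (volume {x | lam < |fracMaximal n s (fun y => h ‖y - x₀‖) x|}).toReal := by
    refine ENNReal.toReal_mono ((volume_setOf_lt_fracMaximal_le hn hs0 hsn hh0 hmono hf
      hlam).trans_lt ENNReal.ofReal_lt_top).ne ?_
    rw [← measure_sdiff_null (measure_singleton x₀)]
    exact measure_mono hsub
  have hratio : (D / (D + R)) ^ n =
      (volume (ball x₀ D)).toReal / (volume (ball x₀ (D + R))).toReal := by
    rw [volume_ball_toReal hn _ hD.le, volume_ball_toReal hn _ (by positivity), div_pow,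
      mul_div_mul_right _ _ (unitBallVol_pos n).ne']
  calc ((D / (D + R)) ^ n) ^ p * m = lam * (volume (ball x₀ D)).toReal ^ p := by
        rw [hratio, div_rpow ENNReal.toReal_nonneg ENNReal.toReal_nonneg, div_eq_mul_inv,
          ← rpow_neg ENNReal.toReal_nonneg]
        ring
    _ ≤ lam * (volume {x | lam < |fracMaximal n s (fun y => h ‖y - x₀‖) x|}).toReal ^ p := by
        gcongr
    _ ≤ weakNorm n s (fracMaximal n s fun y => h ‖y - x₀‖) :=
        mul_volume_setOf_lt_fracMaximal_rpow_le_weakNorm hn hs0 hsn hh0 hmono hf hlam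

lemma setIntegral_ball_le_weakNorm (hn : 1 ≤ n) (hs0 : 0 ≤ s) (hsn : s < n)
    (hh0 : ∀ t, 0 ≤ t → 0 ≤ h t) (hmono : AntitoneOn h (Ici 0))
    (hf : Integrable fun y => h ‖y - x₀‖) {R : ℝ} (hR : 0 < R) :
    ∫ y in ball x₀ R, |h ‖y - x₀‖| ≤ weakNorm n s (fracMaximal n s fun y => h ‖y - x₀‖) := by
  have hp : 0 ≤ ((n : ℝ) - s) / n := div_nonneg (sub_nonneg.2 hsn.le) (Nat.cast_nonneg n)
  have hlim := (((tendsto_natCast_div_add_atTop R).pow n).rpow_const (Or.inr hp)).mul_const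
    (∫ y in ball x₀ R, |h ‖y - x₀‖|)
  rw [one_pow, one_rpow, one_mul] at hlim
  exact le_of_tendsto hlim <| (eventually_gt_atTop 0).mono fun N hN =>
    rpow_mul_setIntegral_ball_le_weakNorm hn hs0 hsn hh0 hmono hf hR (Nat.cast_pos.2 hN)

end FractionalMaximal

theorem statement8 (n : ℕ) (hn : 1 ≤ n) (s : ℝ) (hs0 : 0 < s) (hsn : s < n)
    (x₀ : Rn n) (h : ℝ → ℝ) (hh0 : ∀ t, 0 ≤ t → 0 ≤ h t)
    (hmono : AntitoneOn h (Ici 0))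
    (f : Rn n → ℝ) (hfdef : f = fun x => h ‖x - x₀‖) (hf : Integrable f) :
    weakNorm n s (fracMaximal n s f) = ∫ x, |f x| := by
  subst hfdef
  refine le_antisymm (weakNorm_fracMaximal_le hn hs0.le hsn hh0 hmono hf) ?_
  exact le_of_tendsto ((aecover_ball tendsto_id).integral_tendsto_of_countably_generated hf.abs)
    ((eventually_gt_atTop 0).mono fun R hR =>
      setIntegral_ball_le_weakNorm hn hs0.le hsn hh0 hmono hf hR)
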